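/- arXiv:2004.12293 — 6 statements merged into one kernel-verified Lean document; each statement's English description precedes it below -/
import Mathlib

section
/- Let P be a probability measure on a measurable space Ω, let η : Ω → [0,1] be measurable, and let A_1, …, A_m be a finite measurable partition of Ω with P(A_l) > 0 for every l. Let p_l = (∫_{A_l} η dP)/P(A_l) and let η̄ : Ω → ℝ be the simple function equal to p_l on A_l. Then Σ_{l=1}^m P(A_l) · 2 p_l (1 − p_l) − ∫_Ω 2 η(x)(1 − η(x)) dP(x) = 2 ∫_Ω (η(x) − η̄(x))² dP(x); in particular the tree impurity Σ_{l=1}^m P(A_l) · 2 p_l (1 − p_l) is greater than or equal to the oracle impurity ∫_Ω 2 η(1 − η) dP. -/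
/-!
On each leaf `A` with mean `a = ⨍_A η`, expanding `2 a (1 - a)` and `(η - a)²` shows that
`P(A) · 2a(1 - a) - ∫_A 2η(1 - η) = 2 ∫_A (η - a)²`: both sides equal `2 ∫_A η² - 2 P(A) a²`,
because `P(A) a = ∫_A η`. Summing over the leaves gives the identity, and the right-hand side
is nonnegative.
-/

open MeasureTheory Set

def gini (p : ℝ) : ℝ := 2 * p * (1 - p)

section

variable {α : Type*} [MeasurableSpace α] {μ : Measure α}

theorem measureReal_univ_mul_gini_average_sub_integral_gini [IsFiniteMeasure μ] {f : α → ℝ}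
    (hf : MemLp f 2 μ) :
    μ.real univ * gini (⨍ x, f x ∂μ) - ∫ x, gini (f x) ∂μ
      = 2 * ∫ x, (f x - ⨍ y, f y ∂μ) ^ 2 ∂μ := by
  set a := ⨍ y, f y ∂μ
  have hf1 : Integrable f μ := hf.integrable one_le_two
  have hf2 : Integrable (fun x => f x ^ 2) μ := hf.integrable_sq
  have hmean : μ.real univ * a = ∫ x, f x ∂μ := measure_smul_average μ f
  have hgini : ∫ x, gini (f x) ∂μ = 2 * ∫ x, f x ∂μ - 2 * ∫ x, f x ^ 2 ∂μ := by
    have : (fun x => gini (f x)) = fun x => 2 * f x - 2 * f x ^ 2 := by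
      funext x; unfold gini; ring
    rw [this, integral_sub (hf1.const_mul 2) (hf2.const_mul 2), integral_const_mul,
      integral_const_mul]
  have hvar : ∫ x, (f x - a) ^ 2 ∂μ
      = ∫ x, f x ^ 2 ∂μ - 2 * a * ∫ x, f x ∂μ + μ.real univ * a ^ 2 := by
    have : (fun x => (f x - a) ^ 2) = fun x => f x ^ 2 - 2 * a * f x + a ^ 2 := by
      funext x; ring
    rw [this, integral_add (f := fun x => f x ^ 2 - 2 * a * f x) (hf2.sub (hf1.const_mul _))
      (integrable_const _), integral_sub hf2 (hf1.const_mul _), integral_const_mul,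
      integral_const, smul_eq_mul]
  rw [hgini, hvar]
  unfold gini
  linear_combination (2 - 4 * a) * hmean

theorem MeasureTheory.MemLp.integrable_gini_comp [IsFiniteMeasure μ] {f : α → ℝ} (hf : MemLp f 2 μ) :
    Integrable (fun x => gini (f x)) μ :=
  ((hf.integrable one_le_two).const_mul 2).sub (hf.integrable_sq.const_mul 2) |>.congr
    (.of_forall fun x => by simp only [Pi.sub_apply, gini]; ring)

theorem integral_eq_sum_setIntegral_of_partition {ι : Type*} [Fintype ι] {A : ι → Set α}
    (hA : ∀ i, MeasurableSet (A i)) (hdisj : Pairwise (Function.onFun Disjoint A))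
    (hcover : ⋃ i, A i = univ) {f : α → ℝ} (hf : ∀ i, IntegrableOn f (A i) μ) :
    ∫ x, f x ∂μ = ∑ i, ∫ x in A i, f x ∂μ := by
  rw [← setIntegral_univ, ← hcover, integral_iUnion_fintype hA hdisj hf]

end

theorem stmt0_general {Ω : Type*} [MeasurableSpace Ω] (P : Measure Ω) [IsProbabilityMeasure P]
    (η : Ω → ℝ) (hη : Measurable η) (hη01 : ∀ x, η x ∈ Set.Icc (0 : ℝ) 1)
    (m : ℕ) (A : Fin m → Set Ω) (hA : ∀ l, MeasurableSet (A l))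
    (hdisj : Pairwise (Function.onFun Disjoint A)) (hcover : (⋃ l, A l) = Set.univ)
    (p : Fin m → ℝ) (hp : ∀ l, p l = (∫ x in A l, η x ∂P) / (P (A l)).toReal)
    (ηbar : Ω → ℝ) (hηbar : ∀ l, ∀ x ∈ A l, ηbar x = p l) :
    (∑ l, (P (A l)).toReal * (2 * p l * (1 - p l))) - (∫ x, 2 * η x * (1 - η x) ∂P)
        = 2 * ∫ x, (η x - ηbar x) ^ 2 ∂P ∧
    (∫ x, 2 * η x * (1 - η x) ∂P) ≤ ∑ l, (P (A l)).toReal * (2 * p l * (1 - p l)) := by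
  have hηL2 : MemLp η 2 P := .of_bound hη.aestronglyMeasurable 1 <| .of_forall fun x => by
    rw [Real.norm_eq_abs, abs_le]; constructor <;> linarith [(hη01 x).1, (hη01 x).2]
  have hmean : ∀ l, p l = ⨍ x in A l, η x ∂P := fun l => by
    rw [hp l, setAverage_eq, smul_eq_mul, inv_mul_eq_div, measureReal_def]
  have hleaf : ∀ l, (P (A l)).toReal * gini (p l) - ∫ x in A l, gini (η x) ∂P
      = 2 * ∫ x in A l, (η x - ηbar x) ^ 2 ∂P := fun l => by
    have h := measureReal_univ_mul_gini_average_sub_integral_gini (hηL2.restrict (A l))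
    rw [measureReal_restrict_apply_univ, ← hmean l] at h
    rw [setIntegral_congr_fun (f := fun x => (η x - ηbar x) ^ 2) (g := fun x => (η x - p l) ^ 2)
      (hA l) fun x hx => by simp only [hηbar l x hx]]
    exact h
  have hdev : ∀ l, IntegrableOn (fun x => (η x - ηbar x) ^ 2) (A l) P := fun l =>
    ((hηL2.sub (memLp_const (p l))).integrable_sq.integrableOn).congr_fun
      (fun x hx => by simp only [Pi.sub_apply, hηbar l x hx]) (hA l)
  have hexcess : (∑ l, (P (A l)).toReal * gini (p l)) - ∫ x, gini (η x) ∂P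
      = 2 * ∫ x, (η x - ηbar x) ^ 2 ∂P := by
    rw [integral_eq_sum_setIntegral_of_partition hA hdisj hcover
      fun l => hηL2.integrable_gini_comp.integrableOn,
      integral_eq_sum_setIntegral_of_partition hA hdisj hcover hdev, Finset.mul_sum,
      ← Finset.sum_sub_distrib]
    exact Finset.sum_congr rfl fun l _ => hleaf l
  refine ⟨hexcess, ?_⟩
  have : 0 ≤ ∫ x, (η x - ηbar x) ^ 2 ∂P := integral_nonneg fun x => sq_nonneg _
  unfold gini at hexcess
  linarith

/-- The excess of the tree impurity over the oracle impurity equals twice the integral of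
the squared deviation between `η` and its leaf-wise conditional mean `η̄`; in particular the
tree impurity dominates the oracle impurity. -/
theorem stmt0 {Ω : Type*} [MeasurableSpace Ω] (P : Measure Ω) [IsProbabilityMeasure P]
    (η : Ω → ℝ) (hη : Measurable η) (hη01 : ∀ x, η x ∈ Set.Icc (0 : ℝ) 1)
    (m : ℕ) (A : Fin m → Set Ω) (hA : ∀ l, MeasurableSet (A l))
    (hdisj : Pairwise (Function.onFun Disjoint A)) (hcover : (⋃ l, A l) = Set.univ)
    (hpos : ∀ l, 0 < P (A l))
    (p : Fin m → ℝ) (hp : ∀ l, p l = (∫ x in A l, η x ∂P) / (P (A l)).toReal)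
    (ηbar : Ω → ℝ) (hηbar : ∀ l, ∀ x ∈ A l, ηbar x = p l) :
    (∑ l, (P (A l)).toReal * (2 * p l * (1 - p l))) - (∫ x, 2 * η x * (1 - η x) ∂P)
        = 2 * ∫ x, (η x - ηbar x) ^ 2 ∂P ∧
    (∫ x, 2 * η x * (1 - η x) ∂P) ≤ ∑ l, (P (A l)).toReal * (2 * p l * (1 - p l)) :=
  stmt0_general P η hη hη01 m A hA hdisj hcover p hp ηbar hηbar
end

section
/- Let m ∈ ℕ and ε ∈ (0,1). For each j ∈ {1,…,m} let p_j, q_j ∈ [0,1] with |p_j − q_j| ≤ ε, let w_j, v_j ∈ [0,1] with |w_j − v_j| ≤ ε, and let ℓ_j ∈ {0,1}. Define σ_j = 2 p_j (1 − p_j) if (ℓ_j = 1 ⟺ p_j ≥ 1/2) and σ_j = 1 − 2 p_j (1 − p_j) otherwise; define τ_j the same way with q_j in place of p_j. Then |Σ_{j=1}^m w_j σ_j − Σ_{j=1}^m v_j τ_j| ≤ (3 + 2ε) m ε. -/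
/-!
On each leaf split `w σ - v τ = w (σ - τ) + (w - v) τ`. The impurity `2p(1-p)` is `2`-Lipschitz
on `[0,1]`, which bounds `σ - τ` when `p` and `q` lie on the same side of `1/2`. When they lie on
opposite sides, one of `σ, τ` is an impurity and the other its complement, and since
`2p(1-p) = 1/2 - 2(p - 1/2)²` the difference is `2((p - 1/2)² + (q - 1/2)²) ≤ 2(p - q)²`. Hence
each leaf contributes at most `(2ε + 2ε²) + ε`, and summing over the `m` leaves gives the bound.
-/

namespace Gini

def impurity (p : ℝ) : ℝ := 2 * p * (1 - p)

noncomputable def signedImpurity (ℓ : Bool) (p : ℝ) : ℝ :=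
  if ℓ = true ↔ 1 / 2 ≤ p then impurity p else 1 - impurity p

lemma abs_signedImpurity_le_one {p : ℝ} (hp : p ∈ Set.Icc (0 : ℝ) 1) (ℓ : Bool) :
    |signedImpurity ℓ p| ≤ 1 := by
  obtain ⟨hp0, hp1⟩ := hp
  unfold signedImpurity impurity
  split <;> rw [abs_le] <;> constructor <;> nlinarith

lemma abs_impurity_sub_impurity_le {p q : ℝ} (hp : p ∈ Set.Icc (0 : ℝ) 1)
    (hq : q ∈ Set.Icc (0 : ℝ) 1) : |impurity p - impurity q| ≤ 2 * |p - q| := by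
  have hpq : |1 - p - q| ≤ 1 := abs_le.mpr ⟨by linarith [hp.2, hq.2], by linarith [hp.1, hq.1]⟩
  calc |impurity p - impurity q| = 2 * |p - q| * |1 - p - q| := by
        rw [← abs_two, ← abs_mul, ← abs_mul]; unfold impurity; ring_nf
    _ ≤ 2 * |p - q| := mul_le_of_le_one_right (by positivity) hpq

lemma abs_impurity_add_impurity_sub_one_le {p q : ℝ} (hpq : (p - 1 / 2) * (q - 1 / 2) ≤ 0) :
    |impurity p + impurity q - 1| ≤ 2 * (p - q) ^ 2 := by
  have h : impurity p + impurity q - 1 = -2 * ((p - 1 / 2) ^ 2 + (q - 1 / 2) ^ 2) := by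
    unfold impurity; ring
  rw [h, abs_le]
  constructor <;> nlinarith [sq_nonneg (p - 1 / 2), sq_nonneg (q - 1 / 2)]

lemma mul_sub_half_nonpos_of_not_iff {p q : ℝ} (h : ¬(1 / 2 ≤ p ↔ 1 / 2 ≤ q)) :
    (p - 1 / 2) * (q - 1 / 2) ≤ 0 := by
  rcases le_or_gt (1 / 2) p with hp | hp
  · have hq : q < 1 / 2 := not_le.mp fun hq => h (iff_of_true hp hq)
    nlinarith
  · have hq : 1 / 2 ≤ q := not_lt.mp fun hq => h (iff_of_false hp.not_ge hq.not_ge)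
    nlinarith

lemma abs_signedImpurity_sub_le {p q : ℝ} (hp : p ∈ Set.Icc (0 : ℝ) 1)
    (hq : q ∈ Set.Icc (0 : ℝ) 1) (ℓ : Bool) :
    |signedImpurity ℓ p - signedImpurity ℓ q| ≤ 2 * |p - q| + 2 * (p - q) ^ 2 := by
  have hlip := abs_impurity_sub_impurity_le hp hq
  unfold signedImpurity
  split_ifs with hℓp hℓq hℓq
  · linarith [sq_nonneg (p - q)]
  · have hcross := abs_impurity_add_impurity_sub_one_le
      (mul_sub_half_nonpos_of_not_iff fun h => hℓq (hℓp.trans h))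
    rw [show impurity p - (1 - impurity q) = impurity p + impurity q - 1 by ring]
    linarith [abs_nonneg (p - q)]
  · have hcross := abs_impurity_add_impurity_sub_one_le
      (mul_sub_half_nonpos_of_not_iff fun h => hℓp (hℓq.trans h.symm))
    rw [show 1 - impurity p - impurity q = -(impurity p + impurity q - 1) by ring, abs_neg]
    linarith [abs_nonneg (p - q)]
  · rw [show 1 - impurity p - (1 - impurity q) = -(impurity p - impurity q) by ring, abs_neg]
    linarith [sq_nonneg (p - q)]

lemma abs_mul_signedImpurity_sub_mul_le {ε p q w v : ℝ} (hp : p ∈ Set.Icc (0 : ℝ) 1)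
    (hq : q ∈ Set.Icc (0 : ℝ) 1) (hpq : |p - q| ≤ ε) (hw : w ∈ Set.Icc (0 : ℝ) 1)
    (hwv : |w - v| ≤ ε) (ℓ : Bool) :
    |w * signedImpurity ℓ p - v * signedImpurity ℓ q| ≤ (3 + 2 * ε) * ε := by
  set σ := signedImpurity ℓ p
  set τ := signedImpurity ℓ q
  have hε : 0 ≤ ε := (abs_nonneg _).trans hpq
  have hsq : (p - q) ^ 2 ≤ ε ^ 2 := by
    rw [← sq_abs]; exact pow_le_pow_left₀ (abs_nonneg _) hpq 2
  have hστ : |σ - τ| ≤ 2 * ε + 2 * ε ^ 2 := by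
    linarith [abs_signedImpurity_sub_le hp hq ℓ]
  have hw1 : |w| ≤ 1 := abs_le.mpr ⟨by linarith [hw.1], hw.2⟩
  calc |w * σ - v * τ| = |w * (σ - τ) + (w - v) * τ| := by ring_nf
    _ ≤ |w| * |σ - τ| + |w - v| * |τ| := by rw [← abs_mul, ← abs_mul]; exact abs_add_le _ _
    _ ≤ 1 * (2 * ε + 2 * ε ^ 2) + ε * 1 := by
        gcongr
        exact abs_signedImpurity_le_one hq ℓ
    _ = (3 + 2 * ε) * ε := by ring

end Gini

theorem stmt3_general (m : ℕ) (ε : ℝ)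
    (p q w v : Fin m → ℝ) (ℓ : Fin m → Bool)
    (hp : ∀ j, p j ∈ Set.Icc (0 : ℝ) 1) (hq : ∀ j, q j ∈ Set.Icc (0 : ℝ) 1)
    (hpq : ∀ j, |p j - q j| ≤ ε)
    (hw : ∀ j, w j ∈ Set.Icc (0 : ℝ) 1)
    (hwv : ∀ j, |w j - v j| ≤ ε)
    (σ τ : Fin m → ℝ)
    (hσ : ∀ j, σ j =
      if ℓ j = true ↔ 1 / 2 ≤ p j then 2 * p j * (1 - p j) else 1 - 2 * p j * (1 - p j))
    (hτ : ∀ j, τ j =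
      if ℓ j = true ↔ 1 / 2 ≤ q j then 2 * q j * (1 - q j) else 1 - 2 * q j * (1 - q j)) :
    |∑ j, w j * σ j - ∑ j, v j * τ j| ≤ (3 + 2 * ε) * m * ε := by
  have hleaf : ∀ j, |w j * σ j - v j * τ j| ≤ (3 + 2 * ε) * ε := fun j => by
    rw [hσ j, hτ j]
    exact Gini.abs_mul_signedImpurity_sub_mul_le (hp j) (hq j) (hpq j) (hw j) (hwv j) (ℓ j)
  calc |∑ j, w j * σ j - ∑ j, v j * τ j| = |∑ j, (w j * σ j - v j * τ j)| := by
        rw [Finset.sum_sub_distrib]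
    _ ≤ ∑ j, |w j * σ j - v j * τ j| := Finset.abs_sum_le_sum_abs _ _
    _ ≤ ∑ _j : Fin m, (3 + 2 * ε) * ε := Finset.sum_le_sum fun j _ => hleaf j
    _ = (3 + 2 * ε) * m * ε := by
        rw [Finset.sum_const, Finset.card_univ, Fintype.card_fin, nsmul_eq_mul]
        ring

/-- Deterministic core of Lemma 3: the signed tree impurities computed from two nearby sets of
leaf probabilities and weights, with the same class label assignment, differ by at most
`(3 + 2ε) m ε`. -/
theorem stmt3 (m : ℕ) (ε : ℝ) (hε : ε ∈ Set.Ioo (0 : ℝ) 1)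
    (p q w v : Fin m → ℝ) (ℓ : Fin m → Bool)
    (hp : ∀ j, p j ∈ Set.Icc (0 : ℝ) 1) (hq : ∀ j, q j ∈ Set.Icc (0 : ℝ) 1)
    (hpq : ∀ j, |p j - q j| ≤ ε)
    (hw : ∀ j, w j ∈ Set.Icc (0 : ℝ) 1) (hv : ∀ j, v j ∈ Set.Icc (0 : ℝ) 1)
    (hwv : ∀ j, |w j - v j| ≤ ε)
    (σ τ : Fin m → ℝ)
    (hσ : ∀ j, σ j =
      if ℓ j = true ↔ 1 / 2 ≤ p j then 2 * p j * (1 - p j) else 1 - 2 * p j * (1 - p j))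
    (hτ : ∀ j, τ j =
      if ℓ j = true ↔ 1 / 2 ≤ q j then 2 * q j * (1 - q j) else 1 - 2 * q j * (1 - q j)) :
    |∑ j, w j * σ j - ∑ j, v j * τ j| ≤ (3 + 2 * ε) * m * ε :=
  stmt3_general m ε p q w v ℓ hp hq hpq hw hwv σ τ hσ hτ
end

section
/- Let P be a probability measure on a measurable space Ω, let η : Ω → [0,1] be measurable, let ε ≥ 0, and let {A_1,…,A_m} be a finite measurable partition of Ω with P(A_l) > 0 for each l. Let p_l = (∫_{A_l} η dP)/P(A_l), and suppose that for every l and every x ∈ A_l, |η(x) − p_l| ≤ ε. Then |Σ_{l=1}^m P(A_l) · 2 p_l (1 − p_l) − ∫_Ω 2 η(1 − η) dP| ≤ 2ε. -/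
/-!
The Gini function is a concave quadratic, so expanding it around the leaf mean `p` gives
`gini y = gini p + gini' p (y - p) - 2 (y - p)²`. Integrated over a leaf, the linear term
vanishes because `p` is the mean of `η` there, so the leaf's impurity gap is exactly
`2 ∫ (η - p)²`, which is at most `2ε` times the leaf's mass since `|η - p| ≤ min ε 1`.
Summing over the partition gives `2ε`.
-/

open MeasureTheory Set

theorem gini_eq_add_sub (p y : ℝ) :
    gini y = gini p + (2 - 4 * p) * (y - p) - 2 * (y - p) ^ 2 := by
  unfold gini; ring

section

variable {Ω : Type*} [MeasurableSpace Ω] {μ : Measure Ω} [IsFiniteMeasure μ] {η : Ω → ℝ}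
  {p ε : ℝ}

theorem integrable_gini_of_memLp (hη : MemLp η 2 μ) : Integrable (fun x => gini (η x)) μ := by
  refine (((hη.integrable one_le_two).const_mul 2).sub (hη.integrable_sq.const_mul 2)).congr
    (ae_of_all _ fun x => ?_)
  simp only [Pi.sub_apply, gini]
  ring

theorem measureReal_univ_mul_gini_sub_integral_gini (hη : MemLp η 2 μ)
    (hmean : ∫ x, η x ∂μ = μ.real univ * p) :
    μ.real univ * gini p - ∫ x, gini (η x) ∂μ = 2 * ∫ x, (η x - p) ^ 2 ∂μ := by
  have hη1 : Integrable η μ := hη.integrable one_le_two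
  have hlin : Integrable (fun x => (2 - 4 * p) * (η x - p)) μ :=
    (hη1.sub (integrable_const p)).const_mul _
  have hsq : Integrable (fun x => 2 * (η x - p) ^ 2) μ :=
    (hη.sub (memLp_const p)).integrable_sq.const_mul 2
  have hcentered : ∫ x, (2 - 4 * p) * (η x - p) ∂μ = 0 := by
    rw [integral_const_mul, integral_sub hη1 (integrable_const p), hmean, integral_const,
      smul_eq_mul, sub_self, mul_zero]
  have haffine : Integrable (fun x => gini p + (2 - 4 * p) * (η x - p)) μ :=
    (integrable_const _).add hlin
  rw [funext fun x => gini_eq_add_sub p (η x), integral_sub haffine hsq,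
    integral_add (integrable_const _) hlin, hcentered, integral_const, integral_const_mul,
    smul_eq_mul]
  ring

theorem abs_measureReal_univ_mul_gini_sub_integral_gini_le (hη : MemLp η 2 μ)
    (hmean : ∫ x, η x ∂μ = μ.real univ * p) (hdev : ∀ᵐ x ∂μ, |η x - p| ≤ ε)
    (hdev_one : ∀ᵐ x ∂μ, |η x - p| ≤ 1) :
    |μ.real univ * gini p - ∫ x, gini (η x) ∂μ| ≤ 2 * ε * μ.real univ := by
  have hsq_le : ∀ᵐ x ∂μ, ‖(η x - p) ^ 2‖ ≤ ε := by
    filter_upwards [hdev, hdev_one] with x hε h1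
    rw [Real.norm_eq_abs, abs_pow]
    nlinarith [abs_nonneg (η x - p)]
  rw [measureReal_univ_mul_gini_sub_integral_gini hη hmean, abs_mul, abs_two, mul_assoc]
  exact mul_le_mul_of_nonneg_left (norm_integral_le_of_norm_le_const hsq_le) zero_le_two

end

theorem stmt11_general {Ω : Type*} [MeasurableSpace Ω] (P : Measure Ω) [IsProbabilityMeasure P]
    (η : Ω → ℝ) (hη : Measurable η) (hη01 : ∀ x, η x ∈ Set.Icc (0 : ℝ) 1)
    (ε : ℝ)
    (m : ℕ) (A : Fin m → Set Ω) (hA : ∀ l, MeasurableSet (A l))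
    (hdisj : Pairwise (Function.onFun Disjoint A)) (hcover : (⋃ l, A l) = Set.univ)
    (hpos : ∀ l, 0 < P (A l))
    (p : Fin m → ℝ) (hp : ∀ l, p l = (∫ x in A l, η x ∂P) / (P (A l)).toReal)
    (hvar : ∀ l, ∀ x ∈ A l, |η x - p l| ≤ ε) :
    |(∑ l, (P (A l)).toReal * (2 * p l * (1 - p l))) - ∫ x, 2 * η x * (1 - η x) ∂P|
      ≤ 2 * ε := by
  have hηL2 : MemLp η 2 P :=
    .of_bound hη.aestronglyMeasurable 1 (ae_of_all _ fun x => by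
      rw [Real.norm_eq_abs, abs_of_nonneg (hη01 x).1]; exact (hη01 x).2)
  have hp_avg : ∀ l, p l = ⨍ x in A l, η x ∂P := fun l => by
    rw [hp l, setAverage_eq, smul_eq_mul, measureReal_def, inv_mul_eq_div]
  have hp01 : ∀ l, p l ∈ Icc (0 : ℝ) 1 := fun l => hp_avg l ▸
    (convex_Icc 0 1).set_average_mem isClosed_Icc (hpos l).ne' (measure_ne_top _ _)
      (ae_of_all _ hη01) (hηL2.integrable one_le_two).integrableOn
  have hmean : ∀ l, ∫ x in A l, η x ∂P = P.real (A l) * p l := fun l => by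
    rw [hp_avg l, ← smul_eq_mul, measure_smul_setAverage _ (measure_ne_top _ _)]
  have hleaf : ∀ l, |P.real (A l) * gini (p l) - ∫ x in A l, gini (η x) ∂P|
      ≤ 2 * ε * P.real (A l) := fun l => by
    simpa only [measureReal_restrict_apply_univ] using
      abs_measureReal_univ_mul_gini_sub_integral_gini_le (hηL2.restrict (A l))
        (by rw [measureReal_restrict_apply_univ, hmean l])
        ((ae_restrict_iff' (hA l)).2 (ae_of_all _ (hvar l)))
        ((ae_restrict_iff' (hA l)).2 (ae_of_all _ fun x _ =>
          abs_sub_le_of_nonneg_of_le (hη01 x).1 (hη01 x).2 (hp01 l).1 (hp01 l).2))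
  calc |∑ l, P.real (A l) * gini (p l) - ∫ x, gini (η x) ∂P|
      = |∑ l, (P.real (A l) * gini (p l) - ∫ x in A l, gini (η x) ∂P)| := by
        rw [Finset.sum_sub_distrib, ← integral_iUnion_fintype hA hdisj
          fun l => (integrable_gini_of_memLp hηL2).integrableOn, hcover, Measure.restrict_univ]
    _ ≤ ∑ l, 2 * ε * P.real (A l) :=
        (Finset.abs_sum_le_sum_abs _ _).trans (Finset.sum_le_sum fun l _ => hleaf l)
    _ = 2 * ε := by
        rw [← Finset.mul_sum, ← measureReal_iUnion_fintype hdisj hA, hcover, probReal_univ,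
          mul_one]

/-- Step 2 of Technical Lemma 1: if `η` is within `ε` of its leaf-wise conditional mean on
every leaf, then the tree impurity is within `2ε` of the oracle impurity. -/
theorem stmt11 {Ω : Type*} [MeasurableSpace Ω] (P : Measure Ω) [IsProbabilityMeasure P]
    (η : Ω → ℝ) (hη : Measurable η) (hη01 : ∀ x, η x ∈ Set.Icc (0 : ℝ) 1)
    (ε : ℝ) (hε : 0 ≤ ε)
    (m : ℕ) (A : Fin m → Set Ω) (hA : ∀ l, MeasurableSet (A l))
    (hdisj : Pairwise (Function.onFun Disjoint A)) (hcover : (⋃ l, A l) = Set.univ)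
    (hpos : ∀ l, 0 < P (A l))
    (p : Fin m → ℝ) (hp : ∀ l, p l = (∫ x in A l, η x ∂P) / (P (A l)).toReal)
    (hvar : ∀ l, ∀ x ∈ A l, |η x - p l| ≤ ε) :
    |(∑ l, (P (A l)).toReal * (2 * p l * (1 - p l))) - ∫ x, 2 * η x * (1 - η x) ∂P|
      ≤ 2 * ε :=
  stmt11_general P η hη hη01 ε m A hA hdisj hcover hpos p hp hvar
end

section
/- Let d ≥ 1 be an integer, let ε ∈ (0, 1/2), set M = ⌊1/ε⌋, let W ⊆ [0,1]^d, and let K ≥ 0 be a real number. If the number of M-grid cells of [0,1]^d whose intersection with the frontier of W is nonempty is at most K · M^{d−1}, then the Lebesgue measure of the set {x ∈ [0,1]^d : dist(x, frontier W) ≤ ε} (Euclidean distance) is at most 2 · 3^d · K · ε. -/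
/-!
Every point within `ε ≤ 1/M` of the frontier lies within `1/M` of a frontier point `y ∈ [0,1]^d`;
`y` lies in some grid cell meeting the frontier, and the `1/M`-ball around `y` stays inside that
cell enlarged by one mesh width on each side, a cube of volume `(3/M)^d`. Summing over the at
most `K M^(d-1)` cells meeting the frontier gives `3^d K / M`, and `1/M ≤ 2ε` because
`M = ⌊1/ε⌋ ≥ 1/(2ε)` once `1/ε ≥ 2`.
-/

open MeasureTheory

/-- The unit cube `[0,1]^d`. -/
def unitCube (d : ℕ) : Set (EuclideanSpace ℝ (Fin d)) :=
  {x | ∀ j, x j ∈ Set.Icc (0 : ℝ) 1}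

/-- The `M`-grid cell of `[0,1]^d` with index `k`. -/
def gridCell (d M : ℕ) (k : Fin d → Fin M) : Set (EuclideanSpace ℝ (Fin d)) :=
  {x | ∀ j, x j ∈ Set.Icc ((k j : ℝ) / M) (((k j : ℝ) + 1) / M)}

open Metric Set

lemma EuclideanSpace.volume_setOf_forall_mem_Icc {ι : Type*} [Fintype ι] (a b : ι → ℝ) :
    volume {x : EuclideanSpace ℝ ι | ∀ i, x i ∈ Icc (a i) (b i)} =
      ∏ i, ENNReal.ofReal (b i - a i) := by
  have : {x : EuclideanSpace ℝ ι | ∀ i, x i ∈ Icc (a i) (b i)} = WithLp.ofLp ⁻¹' Icc a b := by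
    ext x; simp [Pi.le_def, forall_and]
  rw [this, (PiLp.volume_preserving_ofLp ι).measure_preimage measurableSet_Icc.nullMeasurableSet,
    Real.volume_Icc_pi]

lemma isClosed_unitCube (d : ℕ) : IsClosed (unitCube d) := by
  simp only [unitCube, ofPred_forall]
  exact isClosed_iInter fun j => isClosed_Icc.preimage (by fun_prop)

lemma exists_fin_mem_Icc_div {M : ℕ} (hM : 0 < M) {t : ℝ} (ht : t ∈ Icc (0 : ℝ) 1) :
    ∃ n : Fin M, t ∈ Icc ((n : ℝ) / M) (((n : ℝ) + 1) / M) := by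
  have hMR : (0 : ℝ) < M := by exact_mod_cast hM
  have htM : 0 ≤ t * M := mul_nonneg ht.1 hMR.le
  refine ⟨⟨min ⌊t * M⌋₊ (M - 1), by omega⟩, ?_, ?_⟩
  · rw [div_le_iff₀ hMR]
    exact (Nat.cast_le.2 (min_le_left _ _)).trans (Nat.floor_le htM)
  · rw [le_div_iff₀ hMR]
    rcases min_cases ⌊t * M⌋₊ (M - 1) with ⟨h, -⟩ | ⟨h, -⟩ <;> simp only [h]
    · exact (Nat.lt_floor_add_one _).le
    · rw [Nat.cast_sub (by omega), Nat.cast_one, sub_add_cancel]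
      nlinarith [ht.2]

lemma exists_mem_gridCell {d M : ℕ} (hM : 0 < M) {x : EuclideanSpace ℝ (Fin d)}
    (hx : x ∈ unitCube d) : ∃ k, x ∈ gridCell d M k := by
  choose k hk using fun j => exists_fin_mem_Icc_div hM (hx j)
  exact ⟨k, hk⟩

def enlargedGridCell (d M : ℕ) (k : Fin d → Fin M) : Set (EuclideanSpace ℝ (Fin d)) :=
  {x | ∀ j, x j ∈ Icc (((k j : ℝ) - 1) / M) (((k j : ℝ) + 2) / M)}

lemma volume_enlargedGridCell (d M : ℕ) (k : Fin d → Fin M) :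
    volume (enlargedGridCell d M k) = ENNReal.ofReal (3 / M) ^ d := by
  rw [enlargedGridCell, EuclideanSpace.volume_setOf_forall_mem_Icc]
  simp only [← sub_div, add_sub_sub_cancel]
  norm_num

lemma closedBall_subset_enlargedGridCell {d M : ℕ} {k : Fin d → Fin M}
    {y : EuclideanSpace ℝ (Fin d)} (hy : y ∈ gridCell d M k) :
    closedBall y (1 / M) ⊆ enlargedGridCell d M k := by
  intro x hx j
  have hxy : |x j - y j| ≤ 1 / M :=
    (PiLp.dist_apply_le x y j).trans (mem_closedBall.1 hx)
  obtain ⟨hlo, hhi⟩ := hy j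
  rw [abs_le] at hxy
  constructor
  · rw [sub_div]; linarith
  · rw [show ((k j : ℝ) + 2) / M = ((k j : ℝ) + 1) / M + 1 / M by ring]; linarith

lemma cthickening_subset_biUnion_enlargedGridCell {d M : ℕ} (hM : 0 < M)
    {F : Set (EuclideanSpace ℝ (Fin d))} (hF : IsClosed F) (hFC : F ⊆ unitCube d) :
    cthickening (1 / M) F ⊆
      ⋃ k ∈ {k | (gridCell d M k ∩ F).Nonempty}, enlargedGridCell d M k := by
  rw [hF.cthickening_eq_biUnion_closedBall (by positivity)]
  refine iUnion₂_subset fun y hyF => ?_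
  obtain ⟨k, hk⟩ := exists_mem_gridCell hM (hFC hyF)
  exact (closedBall_subset_enlargedGridCell hk).trans (subset_biUnion_of_mem ⟨y, hk, hyF⟩)

lemma volume_cthickening_le_ncard_mul {d M : ℕ} (hM : 0 < M)
    {F : Set (EuclideanSpace ℝ (Fin d))} (hF : IsClosed F) (hFC : F ⊆ unitCube d) :
    volume (cthickening (1 / M) F) ≤
      {k | (gridCell d M k ∩ F).Nonempty}.ncard * ENNReal.ofReal (3 / M) ^ d := by
  set S := {k | (gridCell d M k ∩ F).Nonempty}
  have hS := S.toFinite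
  calc volume (cthickening (1 / M) F)
      ≤ volume (⋃ k ∈ hS.toFinset, enlargedGridCell d M k) := by
        simpa only [Finite.mem_toFinset] using
          measure_mono (cthickening_subset_biUnion_enlargedGridCell hM hF hFC)
    _ ≤ ∑ k ∈ hS.toFinset, volume (enlargedGridCell d M k) := measure_biUnion_finset_le _ _
    _ = S.ncard * ENNReal.ofReal (3 / M) ^ d := by
        simp only [volume_enlargedGridCell, Finset.sum_const, nsmul_eq_mul,
          ncard_eq_toFinset_card S hS]

lemma volume_cthickening_le_of_ncard_le {d M : ℕ} (hd : 1 ≤ d) (hM : 0 < M)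
    {F : Set (EuclideanSpace ℝ (Fin d))} (hF : IsClosed F) (hFC : F ⊆ unitCube d) {K : ℝ}
    (hcells : ({k | (gridCell d M k ∩ F).Nonempty}.ncard : ℝ) ≤ K * (M : ℝ) ^ (d - 1)) :
    volume (cthickening (1 / M) F) ≤ ENNReal.ofReal (3 ^ d * K / M) := by
  have hMR : (0 : ℝ) < M := by exact_mod_cast hM
  calc volume (cthickening (1 / M) F)
      ≤ {k | (gridCell d M k ∩ F).Nonempty}.ncard * ENNReal.ofReal (3 / M) ^ d :=
        volume_cthickening_le_ncard_mul hM hF hFC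
    _ = ENNReal.ofReal ({k | (gridCell d M k ∩ F).Nonempty}.ncard * (3 / M) ^ d) := by
        rw [ENNReal.ofReal_mul (by positivity), ENNReal.ofReal_natCast,
          ENNReal.ofReal_pow (by positivity)]
    _ ≤ ENNReal.ofReal (K * (M : ℝ) ^ (d - 1) * (3 / M) ^ d) := by gcongr
    _ = ENNReal.ofReal (3 ^ d * K / M) := by
        obtain ⟨n, rfl⟩ := Nat.exists_eq_add_of_le' hd
        rw [Nat.add_sub_cancel, div_pow, pow_succ, pow_succ]
        field_simp

lemma le_one_div_floor_one_div {ε : ℝ} (hε0 : 0 < ε) (hε1 : ε ≤ 1) :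
    ε ≤ 1 / ⌊1 / ε⌋₊ := by
  have hM : (0 : ℝ) < ⌊1 / ε⌋₊ := by
    exact_mod_cast Nat.floor_pos.2 (by rw [le_div_iff₀ hε0]; linarith)
  rw [le_div_iff₀ hM, mul_comm ε, ← le_div_iff₀ hε0]
  exact Nat.floor_le (by positivity)

lemma one_div_floor_one_div_le {ε : ℝ} (hε0 : 0 < ε) (hε : ε ≤ 1 / 2) :
    1 / ⌊1 / ε⌋₊ ≤ 2 * ε := by
  have hM : (1 : ℝ) ≤ ⌊1 / ε⌋₊ := by
    exact_mod_cast (Nat.one_le_floor_iff _).2 (by rw [le_div_iff₀ hε0]; linarith)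
  have hlt := Nat.lt_floor_add_one (1 / ε)
  rw [div_lt_iff₀ hε0] at hlt
  rw [div_le_iff₀ (by linarith)]
  nlinarith

/-- Volume bound on the `ε`-neighborhood of the decision boundary: if at most `K·M^{d-1}`
grid cells (mesh `1/M`, `M = ⌊1/ε⌋`) meet the frontier of `W ⊆ [0,1]^d`, then the Lebesgue
measure of the set of points of `[0,1]^d` within Euclidean distance `ε` of the frontier of
`W` is at most `2·3^d·K·ε`. -/
theorem stmt15 (d : ℕ) (hd : 1 ≤ d) (ε : ℝ) (hε : ε ∈ Set.Ioo (0 : ℝ) (1 / 2))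
    (M : ℕ) (hM : M = ⌊1 / ε⌋₊)
    (W : Set (EuclideanSpace ℝ (Fin d))) (hW : W ⊆ unitCube d)
    (K : ℝ) (hK : 0 ≤ K)
    (hcells : (({k : Fin d → Fin M | (gridCell d M k ∩ frontier W).Nonempty}).ncard : ℝ)
      ≤ K * (M : ℝ) ^ (d - 1)) :
    volume {x ∈ unitCube d | EMetric.infEdist x (frontier W) ≤ ENNReal.ofReal ε}
      ≤ ENNReal.ofReal (2 * 3 ^ d * K * ε) := by
  obtain ⟨hε0, hε2⟩ := hε
  have hMpos : 0 < M := hM ▸ Nat.floor_pos.2 (by rw [le_div_iff₀ hε0]; linarith)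
  have hεM : ε ≤ 1 / M := hM ▸ le_one_div_floor_one_div hε0 (by linarith)
  have hMε : 1 / (M : ℝ) ≤ 2 * ε := hM ▸ one_div_floor_one_div_le hε0 hε2.le
  have hFC : frontier W ⊆ unitCube d :=
    frontier_subset_closure.trans ((isClosed_unitCube d).closure_subset_iff.2 hW)
  calc volume {x ∈ unitCube d | EMetric.infEdist x (frontier W) ≤ ENNReal.ofReal ε}
      -- `cthickening δ F` is by definition `{x | infEdist x F ≤ ENNReal.ofReal δ}`
      ≤ volume (cthickening (1 / M) (frontier W)) :=
        measure_mono fun x hx => cthickening_mono hεM _ hx.2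
    _ ≤ ENNReal.ofReal (3 ^ d * K / M) :=
        volume_cthickening_le_of_ncard_le hd hMpos isClosed_frontier hFC hcells
    _ ≤ ENNReal.ofReal (2 * 3 ^ d * K * ε) := by
        refine ENNReal.ofReal_le_ofReal ?_
        calc 3 ^ d * K / M = 3 ^ d * K * (1 / M) := by ring
          _ ≤ 3 ^ d * K * (2 * ε) := by gcongr
          _ = 2 * 3 ^ d * K * ε := by ring
end

section
/- Let λ > 0, ρ > 0, c ≥ 0, γ, δ, S, S′, V, V′, R, R′ be real numbers satisfying: 0 < δ < V ≤ 1; V′ > 0; 0 ≤ S′ ≤ S − γδ; V′ ≥ V − δ; S/V ≤ c; γ ≥ c + ρ/λ; and |R′ − R| ≤ δρ. Then R′ + λ · (S′/V′) < R + λ · (S/V). -/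
/-!
Removing volume `δ` and at least surface `γ δ` lowers the surface-to-volume ratio from `S / V` by
at least `δ (γ - c) / (V - δ)`, which exceeds `δ (γ - c)` because `V - δ < 1`. Since
`λ (γ - c) ≥ ρ`, the penalty drops by more than `δ ρ`, the most the risk can grow.
-/

lemma svr_drop_lower_bound {α : Type*} [Field α] [LinearOrder α] [IsStrictOrderedRing α]
    {S V c γ δ : α} (hδ : 0 < δ) (hδV : δ < V) (hS : S ≤ c * V) :
    δ * (γ - c) / (V - δ) ≤ S / V - (S - γ * δ) / (V - δ) := by
  have hV : 0 < V := hδ.trans hδV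
  have hVδ : 0 < V - δ := sub_pos.mpr hδV
  rw [div_sub_div _ _ hV.ne' hVδ.ne', div_le_div_iff₀ hVδ (mul_pos hV hVδ)]
  nlinarith [mul_le_mul_of_nonneg_left hS (mul_pos hδ hVδ).le]

lemma lt_div_of_lt_one {α : Type*} [Field α] [LinearOrder α] [IsStrictOrderedRing α] {x d : α}
    (hx : 0 < x) (hd : 0 < d) (hd1 : d < 1) : x < x / d :=
  (lt_div_iff₀ hd).mpr (mul_lt_of_lt_one_right hx hd1)

theorem stmt16_general (lam ρ c γ δ S S' V V' R R' : ℝ)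
    (hlam : 0 < lam) (hρ : 0 < ρ)
    (hδ0 : 0 < δ) (hδV : δ < V) (hV1 : V ≤ 1)
    (hS'0 : 0 ≤ S') (hS' : S' ≤ S - γ * δ)
    (hV'2 : V' ≥ V - δ) (hSV : S / V ≤ c) (hγ : γ ≥ c + ρ / lam)
    (hR : |R' - R| ≤ δ * ρ) :
    R' + lam * (S' / V') < R + lam * (S / V) := by
  have hVδ : 0 < V - δ := sub_pos.mpr hδV
  have hS : S ≤ c * V := (div_le_iff₀ (hδ0.trans hδV)).mp hSV
  have hgap : ρ ≤ lam * (γ - c) := by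
    rw [← div_le_iff₀' hlam]
    linarith
  have hdrop : δ * ρ < lam * (S / V - (S - γ * δ) / (V - δ)) := calc
    δ * ρ ≤ δ * (lam * (γ - c)) := by gcongr
    _ < δ * (lam * (γ - c)) / (V - δ) :=
      lt_div_of_lt_one (mul_pos hδ0 (hρ.trans_le hgap)) hVδ (by linarith)
    _ = lam * (δ * (γ - c) / (V - δ)) := by ring
    _ ≤ lam * (S / V - (S - γ * δ) / (V - δ)) := by
      gcongr
      exact svr_drop_lower_bound hδ0 hδV hS
  have hratio : S' / V' ≤ (S - γ * δ) / (V - δ) :=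
    div_le_div₀ (hS'0.trans hS') hS' hVδ hV'2
  have hrisk : R' ≤ R + δ * ρ := by linarith [(abs_le.mp hR).2]
  linarith [mul_le_mul_of_nonneg_left hratio hlam.le]

/-- Arithmetic core of Step 2 of Proposition 1: under the listed inequalities on surfaces,
volumes, risks and the penalty, the competitor `f'` has strictly smaller SVR-penalized risk. -/
theorem stmt16 (lam ρ c γ δ S S' V V' R R' : ℝ)
    (hlam : 0 < lam) (hρ : 0 < ρ) (hc : 0 ≤ c)
    (hδ0 : 0 < δ) (hδV : δ < V) (hV1 : V ≤ 1) (hV' : 0 < V')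
    (hS'0 : 0 ≤ S') (hS' : S' ≤ S - γ * δ)
    (hV'2 : V' ≥ V - δ) (hSV : S / V ≤ c) (hγ : γ ≥ c + ρ / lam)
    (hR : |R' - R| ≤ δ * ρ) :
    R' + lam * (S' / V') < R + lam * (S / V) :=
  stmt16_general lam ρ c γ δ S S' V V' R R' hlam hρ hδ0 hδV hV1 hS'0 hS' hV'2 hSV hγ hR
end

section
/- Let d ≥ 1 and M ≥ 1 be natural numbers, let 𝒢 be the set of M-grid cells of [0,1]^d, and let W ⊆ [0,1]^d. Let 𝒞 ⊆ 𝒢 be a collection of cells whose union contains W and whose cardinality is minimal among all subcollections of 𝒢 whose union contains W. Then (⋃𝒞) ∖ W ⊆ ⋃{C ∈ 𝒢 : C ∩ (frontier W) ≠ ∅}; that is, the symmetric difference between W and its minimal grid cover is contained in the union of grid cells meeting the topological boundary of W. -/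
theorem IsPreconnected.inter_frontier_nonempty {α : Type*} [TopologicalSpace α] {C W : Set α}
    (hC : IsPreconnected C) (hCW : (C ∩ W).Nonempty) (hCW' : (C \ W).Nonempty) :
    (C ∩ frontier W).Nonempty := by
  by_contra h
  have hsplit : C ⊆ interior W ∪ (closure W)ᶜ := fun x hx => by
    by_cases hcl : x ∈ closure W
    · exact .inl (by_contra fun hi => h ⟨x, hx, hcl, hi⟩)
    · exact .inr hcl
  have hdisj : Disjoint (interior W) (closure W)ᶜ :=
    Set.disjoint_compl_right_iff_subset.mpr (interior_subset.trans subset_closure)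
  rcases hC.subset_or_subset isOpen_interior isClosed_closure.isOpen_compl hdisj hsplit
    with hsub | hsub
  · obtain ⟨x, hxC, hxW⟩ := hCW'
    exact hxW (interior_subset (hsub hxC))
  · obtain ⟨x, hxC, hxW⟩ := hCW
    exact hsub hxC (subset_closure hxW)

theorem inter_nonempty_of_mem_minimal_cover {ι α : Type*} [DecidableEq ι] {s : ι → Set α}
    {W : Set α} {𝒞 : Finset ι} (hcover : W ⊆ ⋃ i ∈ 𝒞, s i)
    (hmin : ∀ 𝒞' : Finset ι, W ⊆ (⋃ i ∈ 𝒞', s i) → 𝒞.card ≤ 𝒞'.card)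
    {i : ι} (hi : i ∈ 𝒞) : (s i ∩ W).Nonempty := by
  by_contra h
  have hcover' : W ⊆ ⋃ i' ∈ 𝒞.erase i, s i' := fun w hw => by
    obtain ⟨i', hi', hwi'⟩ := Set.mem_iUnion₂.mp (hcover hw)
    have hne : i' ≠ i := by
      rintro rfl
      exact h ⟨w, hwi', hw⟩
    exact Set.mem_iUnion₂.mpr ⟨i', Finset.mem_erase.mpr ⟨hne, hi'⟩, hwi'⟩
  exact (hmin _ hcover').not_gt (Finset.card_erase_lt_of_mem hi)

theorem convex_gridCell (d M : ℕ) (k : Fin d → Fin M) : Convex ℝ (gridCell d M k) :=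
  fun _ hx _ hy _ _ ha hb hab j => by
    simpa using convex_Icc ((k j : ℝ) / M) (((k j : ℝ) + 1) / M) (hx j) (hy j) ha hb hab

theorem stmt18_general (d M : ℕ)
    (W : Set (EuclideanSpace ℝ (Fin d)))
    (𝒞 : Finset (Fin d → Fin M))
    (hcover : W ⊆ ⋃ k ∈ 𝒞, gridCell d M k)
    (hmin : ∀ 𝒞' : Finset (Fin d → Fin M),
      W ⊆ (⋃ k ∈ 𝒞', gridCell d M k) → 𝒞.card ≤ 𝒞'.card) :
    (⋃ k ∈ 𝒞, gridCell d M k) \ W ⊆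
      ⋃ k ∈ {k : Fin d → Fin M | (gridCell d M k ∩ frontier W).Nonempty}, gridCell d M k := by
  rintro x ⟨hxU, hxW⟩
  obtain ⟨k, hk𝒞, hxk⟩ := Set.mem_iUnion₂.mp hxU
  have hmeet := inter_nonempty_of_mem_minimal_cover hcover hmin hk𝒞
  have hfr : (gridCell d M k ∩ frontier W).Nonempty :=
    (convex_gridCell d M k).isPreconnected.inter_frontier_nonempty hmeet ⟨x, hxk, hxW⟩
  exact Set.mem_iUnion₂.mpr ⟨k, hfr, hxk⟩

/-- First claim in the proof of Lemma 7: the symmetric difference between `W` and a minimal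
grid cover of `W` is contained in the union of the grid cells meeting the frontier of `W`. -/
theorem stmt18 (d M : ℕ) (hd : 1 ≤ d) (hM : 1 ≤ M)
    (W : Set (EuclideanSpace ℝ (Fin d))) (hW : W ⊆ unitCube d)
    (𝒞 : Finset (Fin d → Fin M))
    (hcover : W ⊆ ⋃ k ∈ 𝒞, gridCell d M k)
    (hmin : ∀ 𝒞' : Finset (Fin d → Fin M),
      W ⊆ (⋃ k ∈ 𝒞', gridCell d M k) → 𝒞.card ≤ 𝒞'.card) :
    (⋃ k ∈ 𝒞, gridCell d M k) \ W ⊆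
      ⋃ k ∈ {k : Fin d → Fin M | (gridCell d M k ∩ frontier W).Nonempty}, gridCell d M k :=
  stmt18_general d M W 𝒞 hcover hmin
end
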